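/- Let Λ = diag(λ₁,…,λ_M), λᵢ > 0, ρ > 0, and let V ∈ ℂ^{M×L} have orthonormal columns. Then tr((Λ⁻¹ + ρ V Vᴴ)⁻¹) ≥ tr(Λ) − Σ_{l=1}^{L} λ_l²/(λ_l + 1/ρ), where λ₁ ≥ … ≥ λ_M, with equality when V consists of the first L standard basis vectors. -/

import Mathlib

open Matrix
open scoped ComplexOrder

/-!
Woodbury's identity turns the trace into `tr Λ - tr ((Vᴴ D V)⁻¹ (Vᴴ Λ² V))` with `D = Λ + ρ⁻¹`.
With `W = D^{1/2} V` and `gᵢ = λᵢ² / (λᵢ + ρ⁻¹)`, the subtracted term is `∑ gᵢ Pᵢᵢ`, where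
`P = W (WᴴW)⁻¹ Wᴴ` is an orthogonal projection of rank `L`. Its diagonal lies in `[0, 1]` and sums
to `L`, so `∑ gᵢ Pᵢᵢ` is at most the sum of the `L` largest `gᵢ`, which are the first `L` because
`x ↦ x² / (x + c)` is increasing. For the first `L` standard basis vectors everything is diagonal
and the bound is attained.
-/

theorem Finset.sum_mul_le_sum_of_threshold {ι R : Type*} [Fintype ι] [DecidableEq ι] [CommRing R]
    [PartialOrder R] [IsOrderedRing R] (s : Finset ι) (g t : ι → R) (θ : R)
    (hs : ∀ i ∈ s, θ ≤ g i) (hsc : ∀ i ∉ s, g i ≤ θ) (ht0 : ∀ i, 0 ≤ t i) (ht1 : ∀ i, t i ≤ 1)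
    (hsum : ∑ i, t i = s.card) :
    ∑ i, g i * t i ≤ ∑ i ∈ s, g i := by
  have hterm : ∀ i, g i * t i - (if i ∈ s then g i else 0) ≤
      θ * (t i - if i ∈ s then 1 else 0) := by
    intro i
    by_cases hi : i ∈ s
    · simp only [hi, if_true]
      have := mul_nonpos_of_nonneg_of_nonpos (sub_nonneg.2 (hs i hi)) (sub_nonpos.2 (ht1 i))
      linear_combination this
    · simp only [hi, if_false, sub_zero]
      exact mul_le_mul_of_nonneg_right (hsc i hi) (ht0 i)
  have := Finset.sum_le_sum fun i (_ : i ∈ Finset.univ) => hterm i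
  rw [Finset.sum_sub_distrib, ← Finset.mul_sum, Finset.sum_sub_distrib, hsum,
    Finset.sum_ite_mem, Finset.sum_ite_mem, Finset.univ_inter, Finset.sum_const, nsmul_one,
    sub_self, mul_zero] at this
  exact sub_nonpos.1 this

theorem Fin.exists_threshold_of_antitone {M : ℕ} (f : Fin M → ℝ) (hf : Antitone f) (L : ℕ) :
    ∃ θ, (∀ i : Fin M, (i : ℕ) < L → θ ≤ f i) ∧ ∀ i : Fin M, ¬ (i : ℕ) < L → f i ≤ θ := by
  by_cases hL : L < M
  · exact ⟨f ⟨L, hL⟩, fun i hi => hf (Fin.le_def.2 hi.le),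
      fun i hi => hf (Fin.le_def.2 (not_lt.1 hi))⟩
  · exact ⟨⨅ i, f i, fun i _ => ciInf_le (Set.finite_range f).bddBelow i,
      fun i hi => absurd (i.isLt.trans_le (not_lt.1 hL)) hi⟩

theorem sq_div_add_le_sq_div_add {a b c : ℝ} (ha : 0 < a) (hab : a ≤ b) (hc : 0 ≤ c) :
    a ^ 2 / (a + c) ≤ b ^ 2 / (b + c) := by
  have hb : 0 < b := ha.trans_le hab
  rw [div_le_div_iff₀ (by positivity) (by positivity)]
  nlinarith [mul_nonneg (mul_pos ha hb).le (sub_nonneg.2 hab),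
    mul_nonneg hc (mul_nonneg (sub_nonneg.2 hab) (add_pos ha hb).le)]

theorem inv_inv_add_eq_sub_sq_div {x ρ : ℝ} (hx : 0 < x) (hρ : 0 < ρ) :
    (x⁻¹ + ρ)⁻¹ = x - x ^ 2 / (x + 1 / ρ) := by
  field_simp
  ring

namespace Matrix

section StarProjection

variable {n R : Type*} [Fintype n] [CommRing R] [PartialOrder R] [StarRing R] [StarOrderedRing R]
  {P : Matrix n n R}

theorem IsStarProjection.diag_nonneg (hP : IsStarProjection P) (i : n) : 0 ≤ P i i := by
  have hPP : Pᴴ * P = P := by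
    rw [← star_eq_conjTranspose, hP.isSelfAdjoint.star_eq, hP.isIdempotentElem.eq]
  rw [← hPP]
  exact (posSemidef_conjTranspose_mul_self P).diag_nonneg

theorem IsStarProjection.diag_le_one [DecidableEq n] (hP : IsStarProjection P) (i : n) :
    P i i ≤ 1 := by
  simpa using hP.one_sub.diag_nonneg i

end StarProjection

section Field

variable {m n K : Type*} [Fintype m] [Fintype n] [DecidableEq n] [Field K]

theorem inv_diagonal_of_ne_zero {v : n → K} (hv : ∀ i, v i ≠ 0) :
    (diagonal v)⁻¹ = diagonal fun i => (v i)⁻¹ :=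
  inv_eq_left_inv <| by
    rw [diagonal_mul_diagonal, ← diagonal_one]
    exact congrArg diagonal (funext fun i => inv_mul_cancel₀ (hv i))

theorem trace_inv_add_smul_mul [DecidableEq m] {Λ : Matrix m m K} (U : Matrix m n K)
    (W : Matrix n m K) {ρ : K} (hΛ : IsUnit Λ) (hρ : ρ ≠ 0) (hB : IsUnit (ρ⁻¹ • 1 + W * Λ * U)) :
    ((Λ⁻¹ + ρ • (U * W))⁻¹).trace =
      Λ.trace - ((ρ⁻¹ • 1 + W * Λ * U)⁻¹ * (W * (Λ * Λ) * U)).trace := by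
  have hΛinv : Λ⁻¹⁻¹ = Λ := nonsing_inv_nonsing_inv _ ((isUnit_iff_isUnit_det _).1 hΛ)
  have hCinv : (ρ • 1 : Matrix n n K)⁻¹ = ρ⁻¹ • 1 :=
    inv_eq_left_inv (by rw [smul_mul_smul_comm, inv_mul_cancel₀ hρ, one_smul, Matrix.one_mul])
  have hwood := add_mul_mul_inv_eq_sub Λ⁻¹ U (ρ • 1) W (isUnit_nonsing_inv_iff.2 hΛ)
    (isUnit_one.smul (Units.mk0 ρ hρ)) (by rwa [hCinv, hΛinv])
  rw [Matrix.mul_smul, Matrix.mul_one, Matrix.smul_mul, hCinv, hΛinv] at hwood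
  rw [hwood, trace_sub, show Λ * U * (ρ⁻¹ • 1 + W * Λ * U)⁻¹ * W * Λ =
    (Λ * U) * ((ρ⁻¹ • 1 + W * Λ * U)⁻¹ * (W * Λ)) by simp only [Matrix.mul_assoc],
    trace_mul_comm]
  simp only [Matrix.mul_assoc]

variable [StarRing K]

/-- The orthogonal projection onto the column space of `W`, when `Wᴴ * W` is invertible. -/
noncomputable def gramProj (W : Matrix m n K) : Matrix m m K := W * (Wᴴ * W)⁻¹ * Wᴴ

theorem isStarProjection_gramProj {W : Matrix m n K} (hW : IsUnit (Wᴴ * W)) :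
    IsStarProjection (gramProj W) where
  isIdempotentElem := by
    have h := (Wᴴ * W).nonsing_inv_mul ((isUnit_iff_isUnit_det _).1 hW)
    simp only [IsIdempotentElem, gramProj, Matrix.mul_assoc]
    rw [← Matrix.mul_assoc Wᴴ W, ← Matrix.mul_assoc _ (Wᴴ * W), h, Matrix.one_mul]
  isSelfAdjoint := by
    rw [IsSelfAdjoint, star_eq_conjTranspose, gramProj, conjTranspose_mul, conjTranspose_mul,
      conjTranspose_nonsing_inv, conjTranspose_mul, conjTranspose_conjTranspose, Matrix.mul_assoc]

theorem trace_gramProj {W : Matrix m n K} (hW : IsUnit (Wᴴ * W)) :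
    (gramProj W).trace = Fintype.card n := by
  rw [gramProj, trace_mul_comm, ← Matrix.mul_assoc,
    mul_nonsing_inv _ ((isUnit_iff_isUnit_det _).1 hW), trace_one]

theorem trace_inv_gram_mul_eq_trace_mul_gramProj (W : Matrix m n K) (G : Matrix m m K) :
    ((Wᴴ * W)⁻¹ * (Wᴴ * G * W)).trace = (G * gramProj W).trace := by
  rw [gramProj, trace_mul_comm G]
  simp only [Matrix.mul_assoc]
  rw [trace_mul_comm W]
  simp only [Matrix.mul_assoc]

end Field

theorem posDef_conjTranspose_mul_diagonal_mul {m n : Type*} [Fintype m] [DecidableEq m]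
    [Fintype n] [DecidableEq n] {V : Matrix m n ℂ} (hV : Vᴴ * V = 1) {d : m → ℝ} (hd : ∀ i, 0 < d i) :
    (Vᴴ * diagonal (fun i => (d i : ℂ)) * V).PosDef := by
  refine (PosDef.diagonal fun i => Complex.zero_lt_real.2 (hd i)).conjTranspose_mul_mul_same ?_
  refine Function.LeftInverse.injective (g := Vᴴ.mulVec) fun x => ?_
  rw [mulVec_mulVec, hV, one_mulVec]

theorem trace_inv_gram_mul_diagonal_le {M L : ℕ} (hLM : L ≤ M) (W : Matrix (Fin M) (Fin L) ℂ)
    (hW : IsUnit (Wᴴ * W)) (g : Fin M → ℝ) (hg : Antitone g) :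
    ((Wᴴ * W)⁻¹ * (Wᴴ * diagonal (fun i => (g i : ℂ)) * W)).trace ≤
      ((∑ i ∈ Finset.univ.filter (fun i : Fin M => (i : ℕ) < L), g i : ℝ) : ℂ) := by
  have hP := isStarProjection_gramProj hW
  obtain ⟨θ, hθ, hθc⟩ := Fin.exists_threshold_of_antitone g hg L
  rw [trace_inv_gram_mul_eq_trace_mul_gramProj, trace]
  simp only [diag_apply, diagonal_mul, Complex.ofReal_sum]
  refine Finset.sum_mul_le_sum_of_threshold _ _ _ (θ : ℂ)
    (fun i hi => Complex.real_le_real.2 (hθ i (Finset.mem_filter.1 hi).2))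
    (fun i hi => Complex.real_le_real.2 (hθc i fun h => hi (by simpa using h)))
    hP.diag_nonneg hP.diag_le_one ?_
  have htr := trace_gramProj hW
  rw [Fintype.card_fin] at htr
  rw [Fin.card_filter_val_lt, min_eq_right hLM, ← htr]
  rfl

theorem trace_inv_conjTranspose_mul_diagonal_mul_le {M L : ℕ} (hLM : L ≤ M)
    (V : Matrix (Fin M) (Fin L) ℂ) (d h : Fin M → ℝ) (hd : ∀ i, 0 < d i)
    (hhd : Antitone fun i => h i / d i) (hB : IsUnit (Vᴴ * diagonal (fun i => (d i : ℂ)) * V)) :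
    ((Vᴴ * diagonal (fun i => (d i : ℂ)) * V)⁻¹ *
        (Vᴴ * diagonal (fun i => (h i : ℂ)) * V)).trace ≤
      ((∑ i ∈ Finset.univ.filter (fun i : Fin M => (i : ℕ) < L), h i / d i : ℝ) : ℂ) := by
  set S : Matrix (Fin M) (Fin M) ℂ := diagonal fun i => ((√(d i) : ℝ) : ℂ)
  have hconj : ∀ f : Fin M → ℂ,
      (S * V)ᴴ * diagonal f * (S * V) = Vᴴ * diagonal (fun i => (d i : ℂ) * f i) * V := by
    intro f
    simp only [S, conjTranspose_mul, diagonal_conjTranspose, Matrix.mul_assoc,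
      ← Matrix.mul_assoc (diagonal _), diagonal_mul_diagonal]
    congr 3
    funext i
    simp only [Pi.star_apply, Complex.star_def, Complex.conj_ofReal]
    rw [mul_comm, ← mul_assoc, ← Complex.ofReal_mul, Real.mul_self_sqrt (hd i).le]
  have hgram : (S * V)ᴴ * (S * V) = Vᴴ * diagonal (fun i => (d i : ℂ)) * V := by
    simpa using hconj 1
  have hdh : (fun i => (d i : ℂ) * ((h i / d i : ℝ) : ℂ)) = fun i => (h i : ℂ) := by
    funext i
    rw [← Complex.ofReal_mul, mul_div_cancel₀ _ (hd i).ne']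
  have := trace_inv_gram_mul_diagonal_le hLM (S * V) (hgram ▸ hB) _ hhd
  rwa [hgram, hconj, hdh] at this

theorem trace_inv_inv_diagonal_add_smul_mul_conjTranspose {m n : Type*} [Fintype m]
    [DecidableEq m] [Fintype n] [DecidableEq n] (lam : m → ℝ) (hpos : ∀ i, 0 < lam i) {ρ : ℝ}
    (hρ : 0 < ρ) {V : Matrix m n ℂ} (hV : Vᴴ * V = 1) :
    (((diagonal fun i => (lam i : ℂ))⁻¹ + (ρ : ℂ) • (V * Vᴴ))⁻¹).trace =
      (diagonal fun i => (lam i : ℂ)).trace -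
        ((Vᴴ * diagonal (fun i => ((lam i + 1 / ρ : ℝ) : ℂ)) * V)⁻¹ *
          (Vᴴ * diagonal (fun i => ((lam i ^ 2 : ℝ) : ℂ)) * V)).trace := by
  have hgram : (ρ : ℂ)⁻¹ • 1 + Vᴴ * diagonal (fun i => (lam i : ℂ)) * V =
      Vᴴ * diagonal (fun i => ((lam i + 1 / ρ : ℝ) : ℂ)) * V := by
    rw [show diagonal (fun i => ((lam i + 1 / ρ : ℝ) : ℂ)) =
        diagonal (fun i => (lam i : ℂ)) + (ρ : ℂ)⁻¹ • 1 by
      rw [smul_one_eq_diagonal, diagonal_add]; push_cast; simp only [one_div]]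
    rw [Matrix.mul_add, Matrix.add_mul, Matrix.mul_smul, Matrix.mul_one, Matrix.smul_mul, hV,
      add_comm]
  have hsq : diagonal (fun i => (lam i : ℂ)) * diagonal (fun i => (lam i : ℂ)) =
      diagonal (fun i => ((lam i ^ 2 : ℝ) : ℂ)) := by
    rw [diagonal_mul_diagonal]
    push_cast
    simp only [sq]
  have hB : (Vᴴ * diagonal (fun i => ((lam i + 1 / ρ : ℝ) : ℂ)) * V).PosDef :=
    posDef_conjTranspose_mul_diagonal_mul hV fun i => by have := hpos i; positivity
  rw [trace_inv_add_smul_mul V Vᴴ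
    (PosDef.diagonal fun i => Complex.zero_lt_real.2 (hpos i)).isUnit
    (Complex.ofReal_ne_zero.2 hρ.ne') (hgram ▸ hB.isUnit), hgram, hsq]

theorem leadingBasis_mul_conjTranspose {M L : ℕ} :
    (Matrix.of fun (i : Fin M) (j : Fin L) => if (i : ℕ) = (j : ℕ) then (1 : ℂ) else 0) *
        (Matrix.of fun (i : Fin M) (j : Fin L) => if (i : ℕ) = (j : ℕ) then (1 : ℂ) else 0)ᴴ =
      diagonal fun i : Fin M => if (i : ℕ) < L then 1 else 0 := by
  ext i k
  simp only [mul_apply, conjTranspose_apply, of_apply, diagonal_apply,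
    apply_ite (star : ℂ → ℂ), star_one, star_zero, ite_mul, one_mul, zero_mul]
  by_cases hi : (i : ℕ) < L
  · rw [Finset.sum_eq_single (⟨i, hi⟩ : Fin L)
      (fun j _ hj => if_neg fun h : (i : ℕ) = j => hj (Fin.ext h.symm)) (by simp)]
    simp [Fin.ext_iff, eq_comm, hi]
  · rw [Finset.sum_eq_zero fun (j : Fin L) _ => if_neg fun h : (i : ℕ) = j => hi (h ▸ j.isLt)]
    simp [hi]

theorem trace_inv_inv_diagonal_add_smul_diagonal_indicator {M : ℕ} (L : ℕ) (lam : Fin M → ℝ)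
    (hpos : ∀ i, 0 < lam i) {ρ : ℝ} (hρ : 0 < ρ) :
    ((diagonal (fun i => (lam i : ℂ)))⁻¹ +
        (ρ : ℂ) • diagonal (fun i : Fin M => if (i : ℕ) < L then (1 : ℂ) else 0))⁻¹.trace =
      (diagonal fun i => (lam i : ℂ)).trace -
        ((∑ l ∈ Finset.univ.filter (fun i : Fin M => (i : ℕ) < L),
            lam l ^ 2 / (lam l + 1 / ρ) : ℝ) : ℂ) := by
  set e : Fin M → ℝ := fun i => if (i : ℕ) < L then (lam i)⁻¹ + ρ else (lam i)⁻¹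
  have he : ∀ i, 0 < e i := fun i => by
    have := hpos i
    simp only [e]; split_ifs <;> positivity
  have hdiag : (diagonal (fun i => (lam i : ℂ)))⁻¹ +
      (ρ : ℂ) • diagonal (fun i : Fin M => if (i : ℕ) < L then (1 : ℂ) else 0) =
      diagonal fun i => (e i : ℂ) := by
    rw [inv_diagonal_of_ne_zero fun i => Complex.ofReal_ne_zero.2 (hpos i).ne', ← diagonal_smul,
      diagonal_add]
    congr 1
    funext i
    simp only [e, Pi.smul_apply, smul_eq_mul]
    split_ifs <;> push_cast <;> ring
  rw [hdiag, inv_diagonal_of_ne_zero fun i => Complex.ofReal_ne_zero.2 (he i).ne',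
    trace_diagonal, trace_diagonal, Finset.sum_filter, Complex.ofReal_sum,
    ← Finset.sum_sub_distrib]
  refine Finset.sum_congr rfl fun i _ => ?_
  simp only [e]
  split_ifs
  · exact_mod_cast inv_inv_add_eq_sub_sq_div (hpos i) hρ
  · push_cast; simp

end Matrix

theorem stmt16 (M L : ℕ) (hLM : L ≤ M) (lam : Fin M → ℝ) (hpos : ∀ i, 0 < lam i)
    (hdec : ∀ i j : Fin M, i ≤ j → lam j ≤ lam i) (ρ : ℝ) (hρ : 0 < ρ)
    (Λ : Matrix (Fin M) (Fin M) ℂ) (hΛ : Λ = Matrix.diagonal fun i => (lam i : ℂ))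
    (V : Matrix (Fin M) (Fin L) ℂ) (hV : Vᴴ * V = 1)
    (V₀ : Matrix (Fin M) (Fin L) ℂ)
    (hV₀ : V₀ = Matrix.of fun (i : Fin M) (j : Fin L) => if (i : ℕ) = (j : ℕ) then 1 else 0) :
    (Matrix.trace Λ -
        ((∑ l ∈ Finset.univ.filter (fun i : Fin M => (i : ℕ) < L),
            lam l ^ 2 / (lam l + 1 / ρ) : ℝ) : ℂ) ≤
      Matrix.trace ((Λ⁻¹ + (ρ : ℂ) • (V * Vᴴ))⁻¹)) ∧
    Matrix.trace ((Λ⁻¹ + (ρ : ℂ) • (V₀ * V₀ᴴ))⁻¹) =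
      Matrix.trace Λ -
        ((∑ l ∈ Finset.univ.filter (fun i : Fin M => (i : ℕ) < L),
            lam l ^ 2 / (lam l + 1 / ρ) : ℝ) : ℂ) := by
  have hd : ∀ i, 0 < lam i + 1 / ρ := fun i => by have := hpos i; positivity
  have hg : Antitone fun i => lam i ^ 2 / (lam i + 1 / ρ) := fun i j hij =>
    sq_div_add_le_sq_div_add (hpos j) (hdec i j hij) (by positivity)
  subst hΛ hV₀
  refine ⟨?_, ?_⟩
  · rw [trace_inv_inv_diagonal_add_smul_mul_conjTranspose lam hpos hρ hV]
    exact sub_le_sub_left (trace_inv_conjTranspose_mul_diagonal_mul_le hLM V _ _ hd hg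
      (posDef_conjTranspose_mul_diagonal_mul hV hd).isUnit) _
  · rw [leadingBasis_mul_conjTranspose]
    exact trace_inv_inv_diagonal_add_smul_diagonal_indicator L lam hpos hρ
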